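/- arXiv:1710.01321 — 6 statements merged into one kernel-verified Lean document; each statement's English description precedes it below -/
import Mathlib

section
/- A squarefree composite number m is a Carmichael number (i.e., m divides a^m - a for all integers a) if and only if p - 1 divides m - 1 for every prime divisor p of m. -/
/-- Korselt's criterion: a squarefree composite `m` is a Carmichael number
(i.e. `m ∣ a^m - a` for all integers `a`) iff `p - 1 ∣ m - 1` for every
prime divisor `p` of `m`. -/
theorem korselt_criterion (m : ℕ) (hsf : Squarefree m) (hm : 1 < m)
    (hcomp : ¬ Nat.Prime m) :
    (∀ a : ℤ, (m : ℤ) ∣ a ^ m - a) ↔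
      (∀ p : ℕ, p.Prime → p ∣ m → (p - 1) ∣ (m - 1)) := by
  have hm1 : m - 1 + 1 = m := by omega
  constructor
  · intro h p hp hpm
    haveI : Fact p.Prime := ⟨hp⟩
    obtain ⟨g, hg⟩ := IsCyclic.exists_generator (α := (ZMod p)ˣ)
    have hord : orderOf g = p - 1 := by
      rw [orderOf_eq_card_of_forall_mem_zpowers hg, Nat.card_eq_fintype_card, ZMod.card_units_eq_totient,
        Nat.totient_prime hp]
    obtain ⟨a, ha⟩ := ZMod.intCast_surjective (n := p) ((g : (ZMod p)ˣ) : ZMod p)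
    have hdvd : (p : ℤ) ∣ a ^ m - a :=
      dvd_trans (Int.natCast_dvd_natCast.mpr hpm) (h a)
    have hz : ((a ^ m - a : ℤ) : ZMod p) = 0 :=
      (ZMod.intCast_zmod_eq_zero_iff_dvd _ _).mpr hdvd
    push_cast at hz
    rw [ha] at hz
    have hgu : g ^ m = g := by
      ext
      push_cast
      have := sub_eq_zero.mp hz
      simpa using this
    have hpow : g ^ (m - 1) = 1 := by
      have : g ^ (m - 1) * g = 1 * g := by
        rw [one_mul, ← pow_succ, hm1, hgu]
      exact mul_right_cancel this
    rw [← hord]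
    exact orderOf_dvd_of_pow_eq_one hpow
  · intro h a
    have key : ∀ p ∈ m.primeFactors, p ∣ (a ^ m - a).natAbs := by
      intro p hp
      have hpp := Nat.prime_of_mem_primeFactors hp
      have hpm := Nat.dvd_of_mem_primeFactors hp
      haveI : Fact p.Prime := ⟨hpp⟩
      rw [← Int.natCast_dvd_natCast, Int.dvd_natAbs, ← ZMod.intCast_zmod_eq_zero_iff_dvd]
      push_cast
      rw [sub_eq_zero]
      by_cases hx : (a : ZMod p) = 0
      · rw [hx, zero_pow (by omega)]
      · obtain ⟨k, hk⟩ := h p hpp hpm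
        calc (a : ZMod p) ^ m = (a : ZMod p) ^ (m - 1) * a := by rw [← pow_succ, hm1]
        _ = ((a : ZMod p) ^ (p - 1)) ^ k * a := by rw [← pow_mul, ← hk]
        _ = a := by rw [ZMod.pow_card_sub_one_eq_one hx, one_pow, one_mul]
    have hprod := Finset.prod_primes_dvd ((a ^ m - a).natAbs)
      (fun p hp => (Nat.prime_of_mem_primeFactors hp).prime) key
    rw [Nat.prod_primeFactors_of_squarefree hsf] at hprod
    exact Int.dvd_natAbs.mp (Int.natCast_dvd_natCast.mpr hprod)
end

section
/- The number m = 5 \cdot 37 \cdot 73 \cdot 257 \cdot 577 \cdot 769 is a Carmichael number, and m - 1 = 2^8 \cdot 3^4 \cdot 283 \cdot 262433. -/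
theorem carmichael_5_37_73_257_577_769 :
    Squarefree (5 * 37 * 73 * 257 * 577 * 769 : ℕ) ∧ 1 < (5 * 37 * 73 * 257 * 577 * 769 : ℕ) ∧ ¬ Nat.Prime (5 * 37 * 73 * 257 * 577 * 769 : ℕ) ∧
    (∀ p : ℕ, p.Prime → p ∣ (5 * 37 * 73 * 257 * 577 * 769 : ℕ) → (p - 1) ∣ ((5 * 37 * 73 * 257 * 577 * 769 : ℕ) - 1)) ∧
    ((5 * 37 * 73 * 257 * 577 * 769 : ℕ) - 1 = 2 ^ 8 * 3 ^ 4 * 283 * 262433) := by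
  have h5 : Nat.Prime 5 := by norm_num
  have h37 : Nat.Prime 37 := by norm_num
  have h73 : Nat.Prime 73 := by norm_num
  have h257 : Nat.Prime 257 := by norm_num
  have h577 : Nat.Prime 577 := by norm_num
  have h769 : Nat.Prime 769 := by norm_num
  refine ⟨?_, by norm_num, ?_, ?_, by norm_num⟩
  · rw [Nat.squarefree_mul_iff, Nat.squarefree_mul_iff, Nat.squarefree_mul_iff,
      Nat.squarefree_mul_iff, Nat.squarefree_mul_iff]
    refine ⟨by decide, ⟨by decide, ⟨by decide, ⟨by decide, ⟨by decide,
      h5.squarefree, h37.squarefree⟩, h73.squarefree⟩, h257.squarefree⟩, h577.squarefree⟩,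
      h769.squarefree⟩
  · intro h
    have := h.eq_one_or_self_of_dvd 769 (by norm_num)
    norm_num at this
  · intro p hp hdvd
    have : p = 5 ∨ p = 37 ∨ p = 73 ∨ p = 257 ∨ p = 577 ∨ p = 769 := by
      rcases (hp.dvd_mul.mp hdvd) with h | h
      · rcases (hp.dvd_mul.mp h) with h | h
        · rcases (hp.dvd_mul.mp h) with h | h
          · rcases (hp.dvd_mul.mp h) with h | h
            · rcases (hp.dvd_mul.mp h) with h | h
              · exact Or.inl ((Nat.prime_dvd_prime_iff_eq hp h5).mp h)
              · exact Or.inr (Or.inl ((Nat.prime_dvd_prime_iff_eq hp h37).mp h))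
            · exact Or.inr (Or.inr (Or.inl ((Nat.prime_dvd_prime_iff_eq hp h73).mp h)))
          · exact Or.inr (Or.inr (Or.inr (Or.inl ((Nat.prime_dvd_prime_iff_eq hp h257).mp h))))
        · exact Or.inr (Or.inr (Or.inr (Or.inr (Or.inl ((Nat.prime_dvd_prime_iff_eq hp h577).mp h)))))
      · exact Or.inr (Or.inr (Or.inr (Or.inr (Or.inr ((Nat.prime_dvd_prime_iff_eq hp h769).mp h)))))
    rcases this with rfl | rfl | rfl | rfl | rfl | rfl <;> norm_num
end

section
/- The number m = 5 \cdot 37 \cdot 73 \cdot 193 \cdot 257 \cdot 1153 is a Carmichael number, and m - 1 = 2^8 \cdot 3^3 \cdot 11 \cdot 10158227. -/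
theorem carmichael_5_37_73_193_257_1153 :
    Squarefree (5 * 37 * 73 * 193 * 257 * 1153 : ℕ) ∧ 1 < (5 * 37 * 73 * 193 * 257 * 1153 : ℕ) ∧ ¬ Nat.Prime (5 * 37 * 73 * 193 * 257 * 1153 : ℕ) ∧
    (∀ p : ℕ, p.Prime → p ∣ (5 * 37 * 73 * 193 * 257 * 1153 : ℕ) → (p - 1) ∣ ((5 * 37 * 73 * 193 * 257 * 1153 : ℕ) - 1)) ∧
    ((5 * 37 * 73 * 193 * 257 * 1153 : ℕ) - 1 = 2 ^ 8 * 3 ^ 3 * 11 * 10158227) := by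
  have h5 : Nat.Prime 5 := by norm_num
  have h37 : Nat.Prime 37 := by norm_num
  have h73 : Nat.Prime 73 := by norm_num
  have h193 : Nat.Prime 193 := by norm_num
  have h257 : Nat.Prime 257 := by norm_num
  have h1153 : Nat.Prime 1153 := by norm_num
  refine ⟨?_, by norm_num, ?_, ?_, by norm_num⟩
  · rw [Nat.squarefree_mul (by norm_num), Nat.squarefree_mul (by norm_num),
      Nat.squarefree_mul (by norm_num), Nat.squarefree_mul (by norm_num),
      Nat.squarefree_mul (by norm_num)]
    exact ⟨⟨⟨⟨⟨h5.squarefree, h37.squarefree⟩, h73.squarefree⟩, h193.squarefree⟩,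
      h257.squarefree⟩, h1153.squarefree⟩
  · intro hp
    have h := hp.eq_one_or_self_of_dvd 5 ⟨37*73*193*257*1153, by norm_num⟩
    omega
  · intro p hp hdvd
    have key : p = 5 ∨ p = 37 ∨ p = 73 ∨ p = 193 ∨ p = 257 ∨ p = 1153 := by
      rcases (Nat.Prime.dvd_mul hp).mp hdvd with h | h
      · rcases (Nat.Prime.dvd_mul hp).mp h with h | h
        · rcases (Nat.Prime.dvd_mul hp).mp h with h | h
          · rcases (Nat.Prime.dvd_mul hp).mp h with h | h
            · rcases (Nat.Prime.dvd_mul hp).mp h with h | h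
              · exact Or.inl ((Nat.prime_dvd_prime_iff_eq hp h5).mp h)
              · exact Or.inr (Or.inl ((Nat.prime_dvd_prime_iff_eq hp h37).mp h))
            · exact Or.inr (Or.inr (Or.inl ((Nat.prime_dvd_prime_iff_eq hp h73).mp h)))
          · exact Or.inr (Or.inr (Or.inr (Or.inl ((Nat.prime_dvd_prime_iff_eq hp h193).mp h))))
        · exact Or.inr (Or.inr (Or.inr (Or.inr (Or.inl ((Nat.prime_dvd_prime_iff_eq hp h257).mp h)))))
      · exact Or.inr (Or.inr (Or.inr (Or.inr (Or.inr ((Nat.prime_dvd_prime_iff_eq hp h1153).mp h)))))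
    rcases key with rfl | rfl | rfl | rfl | rfl | rfl <;> norm_num
end

section
/- The number m = 5 \cdot 13 \cdot 257 \cdot 577 \cdot 1153 \cdot 18433 is a Carmichael number, and the lcm of p-1 over its prime divisors equals 2^{11} \cdot 3^2. -/
theorem carmichael_5_13_257_577_1153_18433 :
    Squarefree (5 * 13 * 257 * 577 * 1153 * 18433 : ℕ) ∧ 1 < (5 * 13 * 257 * 577 * 1153 * 18433 : ℕ) ∧ ¬ Nat.Prime (5 * 13 * 257 * 577 * 1153 * 18433 : ℕ) ∧
    (∀ p : ℕ, p.Prime → p ∣ (5 * 13 * 257 * 577 * 1153 * 18433 : ℕ) → (p - 1) ∣ ((5 * 13 * 257 * 577 * 1153 * 18433 : ℕ) - 1)) ∧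
    ((Nat.primeFactors (5 * 13 * 257 * 577 * 1153 * 18433)).lcm (fun p => p - 1) = 2 ^ 11 * 3 ^ 2) := by
  have h5 : Nat.Prime 5 := by norm_num
  have h13 : Nat.Prime 13 := by norm_num
  have h257 : Nat.Prime 257 := by norm_num
  have h577 : Nat.Prime 577 := by norm_num
  have h1153 : Nat.Prime 1153 := by norm_num
  have h18433 : Nat.Prime 18433 := by norm_num
  have hpf : Nat.primeFactors (5 * 13 * 257 * 577 * 1153 * 18433) =
      ({5, 13, 257, 577, 1153, 18433} : Finset ℕ) := by
    rw [Nat.primeFactors_mul (by norm_num) (by norm_num),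
        Nat.primeFactors_mul (by norm_num) (by norm_num),
        Nat.primeFactors_mul (by norm_num) (by norm_num),
        Nat.primeFactors_mul (by norm_num) (by norm_num),
        Nat.primeFactors_mul (by norm_num) (by norm_num),
        h5.primeFactors, h13.primeFactors, h257.primeFactors, h577.primeFactors,
        h1153.primeFactors, h18433.primeFactors]
    decide
  refine ⟨?_, by norm_num, by norm_num, ?_, ?_⟩
  · rw [Nat.squarefree_mul_iff, Nat.squarefree_mul_iff, Nat.squarefree_mul_iff,
        Nat.squarefree_mul_iff, Nat.squarefree_mul_iff]
    refine ⟨by norm_num, ⟨by norm_num, ⟨by norm_num, ⟨by norm_num, ⟨by norm_num,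
      h5.squarefree, h13.squarefree⟩, h257.squarefree⟩, h577.squarefree⟩, h1153.squarefree⟩,
      h18433.squarefree⟩
  · intro p hp hdvd
    have : p ∈ Nat.primeFactors (5 * 13 * 257 * 577 * 1153 * 18433) :=
      Nat.mem_primeFactors.mpr ⟨hp, hdvd, by norm_num⟩
    rw [hpf] at this
    fin_cases this <;> norm_num
  · rw [hpf]
    decide
end

section
/- The number m = 5 \cdot 37 \cdot 73 \cdot 257 \cdot 577 \cdot 12289 \cdot 18433 is a Carmichael number, and the lcm of p-1 over its prime divisors equals 2^{12} \cdot 3^2. -/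
theorem carmichael_5_37_73_257_577_12289_18433 :
    Squarefree (5 * 37 * 73 * 257 * 577 * 12289 * 18433 : ℕ) ∧ 1 < (5 * 37 * 73 * 257 * 577 * 12289 * 18433 : ℕ) ∧ ¬ Nat.Prime (5 * 37 * 73 * 257 * 577 * 12289 * 18433 : ℕ) ∧
    (∀ p : ℕ, p.Prime → p ∣ (5 * 37 * 73 * 257 * 577 * 12289 * 18433 : ℕ) → (p - 1) ∣ ((5 * 37 * 73 * 257 * 577 * 12289 * 18433 : ℕ) - 1)) ∧
    ((Nat.primeFactors (5 * 37 * 73 * 257 * 577 * 12289 * 18433)).lcm (fun p => p - 1) = 2 ^ 12 * 3 ^ 2) := by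
  have h5 : Nat.Prime 5 := by norm_num
  have h37 : Nat.Prime 37 := by norm_num
  have h73 : Nat.Prime 73 := by norm_num
  have h257 : Nat.Prime 257 := by norm_num
  have h577 : Nat.Prime 577 := by norm_num
  have h12289 : Nat.Prime 12289 := by norm_num
  have h18433 : Nat.Prime 18433 := by norm_num
  refine ⟨?_, by norm_num, by norm_num, ?_, ?_⟩
  · rw [Nat.squarefree_mul_iff, Nat.squarefree_mul_iff, Nat.squarefree_mul_iff,
      Nat.squarefree_mul_iff, Nat.squarefree_mul_iff, Nat.squarefree_mul_iff]
    refine ⟨by norm_num, ⟨by norm_num, ⟨by norm_num, ⟨by norm_num, ⟨by norm_num,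
      ⟨by norm_num, h5.squarefree, h37.squarefree⟩, h73.squarefree⟩, h257.squarefree⟩,
      h577.squarefree⟩, h12289.squarefree⟩, h18433.squarefree⟩
  · intro p hp hdvd
    rcases (hp.dvd_mul.mp hdvd) with h | h
    rotate_left
    · rw [Nat.prime_dvd_prime_iff_eq hp h18433] at h; subst h; norm_num
    rcases (hp.dvd_mul.mp h) with h | h
    rotate_left
    · rw [Nat.prime_dvd_prime_iff_eq hp h12289] at h; subst h; norm_num
    rcases (hp.dvd_mul.mp h) with h | h
    rotate_left
    · rw [Nat.prime_dvd_prime_iff_eq hp h577] at h; subst h; norm_num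
    rcases (hp.dvd_mul.mp h) with h | h
    rotate_left
    · rw [Nat.prime_dvd_prime_iff_eq hp h257] at h; subst h; norm_num
    rcases (hp.dvd_mul.mp h) with h | h
    rotate_left
    · rw [Nat.prime_dvd_prime_iff_eq hp h73] at h; subst h; norm_num
    rcases (hp.dvd_mul.mp h) with h | h
    · rw [Nat.prime_dvd_prime_iff_eq hp h5] at h; subst h; norm_num
    · rw [Nat.prime_dvd_prime_iff_eq hp h37] at h; subst h; norm_num
  · rw [Nat.primeFactors_mul (by norm_num) (by norm_num),
      Nat.primeFactors_mul (by norm_num) (by norm_num),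
      Nat.primeFactors_mul (by norm_num) (by norm_num),
      Nat.primeFactors_mul (by norm_num) (by norm_num),
      Nat.primeFactors_mul (by norm_num) (by norm_num),
      Nat.primeFactors_mul (by norm_num) (by norm_num),
      h5.primeFactors, h37.primeFactors, h73.primeFactors, h257.primeFactors,
      h577.primeFactors, h12289.primeFactors, h18433.primeFactors]
    decide
end

section
/- There is no Carmichael number m such that the lcm L of p-1 over the prime divisors p of m equals 2^\alpha \cdot 43^2 for some \alpha, where m is divisible by 5, 17, and 257, every prime factor of m is of the form 2^k+1, 2^l \cdot 43 + 1, or 2^s \cdot 43^2 + 1 with the only 2^k+1 factors being 5, 17, 257, and m is divisible by 173 = 2^2 \cdot 43 + 1. (Key computational facts: 2^3 \cdot 43 + 1, 2^4 \cdot 43 + 1 = 13 \cdot 53, and 2^4 \cdot 43^2 + 1 = 5 \cdot 61 \cdot 97 are all composite, and 43 \equiv 1 \pmod 3 forces the exponents l, s to be even for prime factors.) -/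
/-!
Work modulo `32`. Every prime of the form `2^l * 43 + 1` or `2^s * 43^2 + 1` other than `173`
has exponent at least `5` (the smaller exponents give composite numbers), so it is `1 mod 32`;
the primes `2^k + 1` dividing `m` are `5, 17, 257`. Since `m` is squarefree, it is the product
of its prime factors, whence `m ≡ 5 * 17 * 257 * 173 ≡ 17 (mod 32)`. But `257 ∣ m` forces
`256 ∣ m - 1`, i.e. `m ≡ 1 (mod 32)`.
-/

lemma ZMod.natCast_eq_one_of_dvd_sub_one {m n : ℕ} (hm : m ≠ 0) (h : n ∣ m - 1) :
    (m : ZMod n) = 1 := by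
  rw [← Nat.sub_add_cancel (Nat.one_le_iff_ne_zero.2 hm), Nat.cast_add, Nat.cast_one,
    (ZMod.natCast_eq_zero_iff _ _).2 h, zero_add]

lemma Squarefree.natCast_eq_prod_of_forall_sdiff_eq_one {R : Type*} [CommSemiring R] {m : ℕ}
    (hm : Squarefree m) {T : Finset ℕ} (hT : T ⊆ m.primeFactors)
    (h : ∀ p ∈ m.primeFactors \ T, (p : R) = 1) :
    (m : R) = ∏ p ∈ T, (p : R) := by
  rw [← Nat.prod_primeFactors_of_squarefree hm, Nat.cast_prod, ← Finset.prod_sdiff hT,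
    Finset.prod_eq_one h, one_mul]

lemma eq_two_of_prime_two_pow_mul_43_add_one {l : ℕ} (hp : (2 ^ l * 43 + 1).Prime)
    (hl : l < 5) : l = 2 := by
  interval_cases l <;> first | rfl | norm_num at hp

lemma five_le_of_prime_two_pow_mul_43_sq_add_one {s : ℕ} (hp : (2 ^ s * 43 ^ 2 + 1).Prime) :
    5 ≤ s := by
  by_contra! hs
  interval_cases s <;> norm_num at hp

lemma natCast_two_pow_mul_add_one_eq_one {l : ℕ} (hl : 5 ≤ l) (c : ℕ) :
    ((2 ^ l * c + 1 : ℕ) : ZMod 32) = 1 :=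
  ZMod.natCast_eq_one_of_dvd_sub_one (by positivity)
    (by simpa using (pow_dvd_pow 2 hl).mul_right c)

lemma natCast_eq_one_of_prime_two_pow_mul_43_or_43_sq_add_one {p : ℕ} (hp : p.Prime)
    (h173 : p ≠ 173)
    (hform : (∃ l : ℕ, p = 2 ^ l * 43 + 1) ∨ (∃ s : ℕ, p = 2 ^ s * 43 ^ 2 + 1)) :
    (p : ZMod 32) = 1 := by
  rcases hform with ⟨l, rfl⟩ | ⟨s, rfl⟩
  · rcases Nat.lt_or_ge l 5 with hl | hl
    · obtain rfl := eq_two_of_prime_two_pow_mul_43_add_one hp hl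
      exact absurd rfl h173
    · exact natCast_two_pow_mul_add_one_eq_one hl 43
  · exact natCast_two_pow_mul_add_one_eq_one (five_le_of_prime_two_pow_mul_43_sq_add_one hp) _

/-- There is no Carmichael number `m` whose `L = lcm of p-1 over prime divisors`
equals `2^α * 43^2`, divisible by `5`, `17`, `257` and `173 = 2^2 * 43 + 1`,
all of whose prime factors are of the form `2^k + 1`, `2^l * 43 + 1`, or
`2^s * 43^2 + 1`, with the only factors of the form `2^k + 1` being
`5`, `17`, `257`. -/
theorem no_carmichael_P_43 :
    ¬ ∃ (m α : ℕ),
      Squarefree m ∧ 1 < m ∧ ¬ Nat.Prime m ∧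
      (∀ p : ℕ, p.Prime → p ∣ m → (p - 1) ∣ (m - 1)) ∧
      m.primeFactors.lcm (fun p => p - 1) = 2 ^ α * 43 ^ 2 ∧
      5 ∣ m ∧ 17 ∣ m ∧ 257 ∣ m ∧ 173 ∣ m ∧
      (∀ p ∈ m.primeFactors,
        (∃ k : ℕ, p = 2 ^ k + 1) ∨ (∃ l : ℕ, p = 2 ^ l * 43 + 1) ∨
        (∃ s : ℕ, p = 2 ^ s * 43 ^ 2 + 1)) ∧
      (∀ p ∈ m.primeFactors, (∃ k : ℕ, p = 2 ^ k + 1) →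
        p = 5 ∨ p = 17 ∨ p = 257) := by
  rintro ⟨m, α, hsq, hm1, -, hcar, -, h5, h17, h257, h173, hform, hfermat⟩
  have hm0 : m ≠ 0 := Nat.ne_zero_of_lt hm1
  have hT : ({5, 17, 257, 173} : Finset ℕ) ⊆ m.primeFactors := by
    intro p hp
    simp only [Finset.mem_insert, Finset.mem_singleton] at hp
    rcases hp with rfl | rfl | rfl | rfl <;>
      exact Nat.mem_primeFactors.2 ⟨by norm_num, ‹_›, hm0⟩
  have hm17 : (m : ZMod 32) = 17 := by
    rw [hsq.natCast_eq_prod_of_forall_sdiff_eq_one hT]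
    · decide
    intro p hp
    simp only [Finset.mem_sdiff, Finset.mem_insert, Finset.mem_singleton, not_or] at hp
    obtain ⟨hpm, hp5, hp17, hp257, hp173⟩ := hp
    rcases hform p hpm with hk | h
    · rcases hfermat p hpm hk with rfl | rfl | rfl <;> contradiction
    · exact natCast_eq_one_of_prime_two_pow_mul_43_or_43_sq_add_one
        (Nat.prime_of_mem_primeFactors hpm) hp173 h
  have hm1' : (m : ZMod 32) = 1 :=
    ZMod.natCast_eq_one_of_dvd_sub_one hm0
      ((by norm_num : 32 ∣ 257 - 1).trans (hcar 257 (by norm_num) h257))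
  exact absurd (hm17.symm.trans hm1') (by decide)
end
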